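/- arXiv:0705.2725 — 2 statements merged into one kernel-verified Lean document; each statement's English description precedes it below -/
import Mathlib

section
/- Let F be a field of characteristic zero, and let Z ∈ F(ħ)[[u]] satisfy the C-recursion: for each i ∈ [n], Z(ħ, α_i, u) = ∑_d (∑_{r=−N_d}^{N_d} Z^r_{i;d} ħ^{−r}) u^d + ∑_{d≥1} ∑_{j≠i} C_i^j(d) u^d (ħ − (α_j−α_i)/d)^{−1} Z((α_j−α_i)/d, α_j, u). If u = e^t, then the transform Z̄ := (x + ħ d/dt) Z, evaluated at x = α_i, also satisfies a C-recursion of the same form (with the same coefficients C_i^j(d) and modified middle terms). -/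
/-!
Split the recursion for `Z` as a Laurent polynomial `S` in `ħ` plus a sum of pole terms. With
`c = (α_j - α_i)/d'`, the factor `u^{d'}` turns `ħ d/dt` into multiplication by `ħ (d - d')` on
`Z(c, α_j)`, and

  `(α_i + ħ d) / (ħ - c) = (α_j + c (d - d')) / (ħ - c) + d`.

So `(α_i + ħ d)` times a pole term is the pole term of the transform plus the `ħ`-independent
constant `C_i^j(d') d Z(c, α_j)`, which is absorbed, together with `(α_i + ħ d) S`, into a Laurent
polynomial whose width in `ħ` is one larger.
-/

/-- A family `Z`, given by its `u`-coefficients `Z hbar i d ∈ F` (functions of `hbar`),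
is `C`-recursive if for each `i` and each degree `d`,
`Z(hbar,α_i,u) = ∑_d (∑_{r=−N_d}^{N_d} Z^r_{i;d} hbar^{−r}) u^d
  + ∑_{d'≥1} ∑_{j≠i} C_i^j(d') u^{d'} (hbar − (α_j−α_i)/d')⁻¹ Z((α_j−α_i)/d', α_j, u)`
holds coefficientwise for all admissible `hbar`. -/
def CRecursive {F : Type*} [Field F] {n : ℕ} (α : Fin n → F)
    (C : Fin n → Fin n → ℕ → F) (Z : F → Fin n → ℕ → F) : Prop :=
  ∃ N : ℕ → ℕ, ∃ c : Fin n → ℕ → ℤ → F,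
    ∀ (i : Fin n) (d : ℕ) (hbar : F), hbar ≠ 0 →
      (∀ j : Fin n, j ≠ i → ∀ d' : ℕ, 1 ≤ d' → d' ≤ d → hbar ≠ (α j - α i) / (d' : F)) →
      Z hbar i d = (∑ r ∈ Finset.Icc (-(N d : ℤ)) ((N d : ℤ)), c i d r * hbar ^ (-r))
        + ∑ d' ∈ Finset.Icc 1 d, ∑ j ∈ Finset.univ.erase i,
            C i j d' * (hbar - (α j - α i) / (d' : F))⁻¹ *
              Z ((α j - α i) / (d' : F)) j (d - d')


open Finset

theorem Finset.sum_indicator_mul_of_subset {ι M : Type*} [NonUnitalNonAssocSemiring M]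
    {s t : Finset ι} (hst : s ⊆ t) (f g : ι → M) :
    ∑ i ∈ t, (s : Set ι).indicator f i * g i = ∑ i ∈ s, f i * g i := by
  simp_rw [← Set.indicator_mul_left]
  exact sum_indicator_subset _ hst

section Laurent

variable {F : Type*} [Field F]

def IsLaurentPolyFun (N : ℕ) (f : F → F) : Prop :=
  ∃ c : ℤ → F, ∀ x ≠ 0, f x = ∑ r ∈ Icc (-(N : ℤ)) N, c r * x ^ (-r)

namespace IsLaurentPolyFun

theorem of_sum (N : ℕ) (c : ℤ → F) :
    IsLaurentPolyFun N fun x => ∑ r ∈ Icc (-(N : ℤ)) N, c r * x ^ (-r) :=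
  ⟨c, fun _ _ => rfl⟩

theorem const (e : F) : IsLaurentPolyFun 0 fun _ => e :=
  ⟨fun r => if r = 0 then e else 0, fun x _ => by simp⟩

theorem mono {N M : ℕ} {f : F → F} (hf : IsLaurentPolyFun N f) (hNM : N ≤ M) :
    IsLaurentPolyFun M f := by
  obtain ⟨c, hc⟩ := hf
  refine ⟨(Icc (-(N : ℤ)) N : Set ℤ).indicator c, fun x hx => ?_⟩
  rw [hc x hx, sum_indicator_mul_of_subset (Icc_subset_Icc (by omega) (by omega))]

theorem add {N : ℕ} {f g : F → F} (hf : IsLaurentPolyFun N f) (hg : IsLaurentPolyFun N g) :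
    IsLaurentPolyFun N fun x => f x + g x := by
  obtain ⟨c, hc⟩ := hf
  obtain ⟨c', hc'⟩ := hg
  exact ⟨c + c', fun x hx => by simp only [hc x hx, hc' x hx, Pi.add_apply, add_mul, sum_add_distrib]⟩

theorem const_mul {N : ℕ} {f : F → F} (hf : IsLaurentPolyFun N f) (a : F) :
    IsLaurentPolyFun N fun x => a * f x := by
  obtain ⟨c, hc⟩ := hf
  exact ⟨a • c, fun x hx => by simp only [hc x hx, mul_sum, Pi.smul_apply, smul_eq_mul, mul_assoc]⟩

theorem id_mul {N : ℕ} {f : F → F} (hf : IsLaurentPolyFun N f) :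
    IsLaurentPolyFun (N + 1) fun x => x * f x := by
  obtain ⟨c, hc⟩ := hf
  refine ⟨fun r => (Icc (-(N : ℤ)) N : Set ℤ).indicator c (r + 1), fun x hx => ?_⟩
  have hIcc : Icc (-(N : ℤ)) (N + 2) =
      (Icc (-((N + 1 : ℕ) : ℤ)) (N + 1 : ℕ)).map (addRightEmbedding 1) := by
    rw [map_add_right_Icc]
    push_cast
    ring_nf
  calc x * f x = ∑ s ∈ Icc (-(N : ℤ)) N, c s * x ^ (-s + 1) := by
        simp only [hc x hx, mul_sum, zpow_add_one₀ hx]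
        exact sum_congr rfl fun _ _ => by ring
    _ = ∑ s ∈ Icc (-(N : ℤ)) (N + 2), (Icc (-(N : ℤ)) N : Set ℤ).indicator c s * x ^ (-s + 1) :=
        (sum_indicator_mul_of_subset (Icc_subset_Icc le_rfl (by omega)) _ _).symm
    _ = _ := by
        rw [hIcc, sum_map]
        exact sum_congr rfl fun r _ => by
          simp only [addRightEmbedding_apply, neg_add, neg_add_cancel_right]

theorem affine_mul_add {N : ℕ} {f : F → F} (hf : IsLaurentPolyFun N f) (a b e : F) :
    IsLaurentPolyFun (N + 1) fun x => (a + x * b) * f x + e := by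
  have h := (((hf.const_mul a).mono N.le_succ).add (hf.id_mul.const_mul b)).add
    ((const e).mono (Nat.zero_le _))
  convert h using 2 with x
  ring

end IsLaurentPolyFun

end Laurent

theorem add_mul_mul_inv_sub_div {F : Type*} [Field F] {a b h k m : F} (hk : k ≠ 0)
    (hh : h ≠ (b - a) / k) :
    (a + h * m) * (h - (b - a) / k)⁻¹ = (h - (b - a) / k)⁻¹ * (b + (b - a) / k * (m - k)) + m := by
  have hp : (b - a) / k * k = b - a := div_mul_cancel₀ _ hk
  have hq : (h - (b - a) / k)⁻¹ * (h - (b - a) / k) = 1 := inv_mul_cancel₀ (sub_ne_zero.mpr hh)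
  linear_combination m * hq + (h - (b - a) / k)⁻¹ * hp

section Recursion

variable {F : Type*} [Field F] {n : ℕ}

def poleSum (α : Fin n → F) (C : Fin n → Fin n → ℕ → F) (Z : F → Fin n → ℕ → F) (i : Fin n)
    (d : ℕ) (hbar : F) : F :=
  ∑ d' ∈ Icc 1 d, ∑ j ∈ univ.erase i,
    C i j d' * (hbar - (α j - α i) / (d' : F))⁻¹ * Z ((α j - α i) / (d' : F)) j (d - d')

theorem mul_poleSum [CharZero F] (α : Fin n → F) (C : Fin n → Fin n → ℕ → F)
    (Z : F → Fin n → ℕ → F) {i : Fin n} {d : ℕ} {hbar : F}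
    (hbar_ne : ∀ j : Fin n, j ≠ i → ∀ d' : ℕ, 1 ≤ d' → d' ≤ d → hbar ≠ (α j - α i) / (d' : F)) :
    (α i + hbar * d) * poleSum α C Z i d hbar =
      poleSum α C (fun hbar i d => α i * Z hbar i d + hbar * (d : F) * Z hbar i d) i d hbar
        + ∑ d' ∈ Icc 1 d, ∑ j ∈ univ.erase i,
            C i j d' * d * Z ((α j - α i) / (d' : F)) j (d - d') := by
  simp only [poleSum, mul_sum, ← sum_add_distrib]
  refine sum_congr rfl fun d' hd' => sum_congr rfl fun j hj => ?_
  obtain ⟨hd'1, hd'd⟩ := mem_Icc.mp hd'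
  have key := add_mul_mul_inv_sub_div (a := α i) (b := α j) (m := (d : F))
    (Nat.cast_ne_zero.mpr (by omega : d' ≠ 0)) (hbar_ne j (ne_of_mem_erase hj) d' hd'1 hd'd)
  rw [Nat.cast_sub hd'd]
  linear_combination (C i j d' * Z ((α j - α i) / (d' : F)) j (d - d')) * key

end Recursion

theorem stmt_4_general {F : Type*} [Field F] [CharZero F] {n : ℕ} (α : Fin n → F)
    (C : Fin n → Fin n → ℕ → F) (Z : F → Fin n → ℕ → F)
    (hZ : CRecursive α C Z) :
    CRecursive α C (fun hbar i d => α i * Z hbar i d + hbar * (d : F) * Z hbar i d) := by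
  obtain ⟨N, c, hrec⟩ := hZ
  have hreg (i : Fin n) (d : ℕ) := (IsLaurentPolyFun.of_sum (N d) (c i d)).affine_mul_add (α i) d
    (∑ d' ∈ Icc 1 d, ∑ j ∈ univ.erase i, C i j d' * d * Z ((α j - α i) / (d' : F)) j (d - d'))
  choose c' hc' using hreg
  refine ⟨fun d => N d + 1, c', fun i d hbar h0 hbar_ne => ?_⟩
  have hpole := mul_poleSum α C Z hbar_ne
  unfold poleSum at hpole
  beta_reduce at hc' hpole ⊢
  rw [← hc' i d hbar h0, hrec i d hbar h0 hbar_ne]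
  linear_combination hpole

/-- If `Z` is `C`-recursive, then with `u = e^t` the transform
`Z̄ = (x + hbar d/dt) Z` (evaluated at `x = α_i`), whose degree-`d` coefficient is
`α_i Z_d + hbar·d·Z_d`, is again `C`-recursive with the same coefficients `C_i^j(d)`. -/
theorem stmt_4 {F : Type*} [Field F] [CharZero F] {n : ℕ} (α : Fin n → F)
    (hα : Function.Injective α) (C : Fin n → Fin n → ℕ → F) (Z : F → Fin n → ℕ → F)
    (hZ : CRecursive α C Z) :
    CRecursive α C (fun hbar i d => α i * Z hbar i d + hbar * (d : F) * Z hbar i d) :=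
  stmt_4_general α C Z hZ
end

section
/- Let F be a field of characteristic zero, let Z(ħ,α_i,u) ∈ F(ħ)[[u]] (for i ∈ [n]) be C-recursive, and let f ∈ F[ħ] be a polynomial in ħ. Then the family Z̄(ħ,α_i,u) := f(ħ)·Z(ħ,α_i,u) is again C-recursive with the same recursion coefficients C_i^j(d). -/
open Finset LaurentPolynomial

section

variable {F : Type*} [Field F]

namespace LaurentPolynomial

theorem eval₂_mk0_eq_sum (p : F[T;T⁻¹]) {x : F} (hx : x ≠ 0) :
    eval₂ (RingHom.id F) (Units.mk0 x hx) p = p.coeff.sum fun n a => a * x ^ n := by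
  induction p using LaurentPolynomial.induction_on' with
  | add p q hp hq =>
    rw [map_add, hp, hq, AddMonoidAlgebra.coeff_add,
      Finsupp.sum_add_index' (fun _ => zero_mul _) (fun _ _ _ => add_mul _ _ _)]
  | C_mul_T n a =>
    rw [eval₂_C_mul_T, ← single_eq_C_mul_T, AddMonoidAlgebra.coeff_single,
      Finsupp.sum_single_index (zero_mul _), Units.val_zpow_eq_zpow_val, Units.val_mk0,
      RingHom.id_apply]

theorem coeff_support_subset_Icc (p : F[T;T⁻¹]) {N : ℕ}
    (hN : p.coeff.support.sup Int.natAbs ≤ N) : p.coeff.support ⊆ Icc (-N : ℤ) N := by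
  intro n hn
  have := (le_sup hn).trans hN
  rw [mem_Icc]
  omega

theorem eval₂_mk0_eq_sum_Icc (p : F[T;T⁻¹]) {x : F} (hx : x ≠ 0) {N : ℕ}
    (hN : p.coeff.support ⊆ Icc (-N : ℤ) N) :
    eval₂ (RingHom.id F) (Units.mk0 x hx) p = ∑ r ∈ Icc (-N : ℤ) N, p.coeff (-r) * x ^ (-r) := by
  rw [eval₂_mk0_eq_sum, Finsupp.sum_of_support_subset _ hN (fun n a => a * x ^ n)
    fun _ _ => zero_mul _]
  refine sum_nbij' Neg.neg Neg.neg ?_ ?_ (fun _ _ => neg_neg _) (fun _ _ => neg_neg _) ?_ <;>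
    simp +contextual [mem_Icc, and_comm, neg_le]

end LaurentPolynomial

def IsLaurent (g : F → F) : Prop :=
  ∃ p : F[T;T⁻¹], ∀ x (hx : x ≠ 0), g x = eval₂ (RingHom.id F) (Units.mk0 x hx) p

namespace IsLaurent

theorem const (a : F) : IsLaurent fun _ : F => a :=
  ⟨C a, fun x hx => by rw [eval₂_C, RingHom.id_apply]⟩

theorem zpow (r : ℤ) : IsLaurent fun x : F => x ^ r :=
  ⟨T r, fun x hx => by rw [eval₂_T, Units.val_zpow_eq_zpow_val, Units.val_mk0]⟩

theorem polynomial_eval (f : Polynomial F) : IsLaurent fun x => f.eval x :=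
  ⟨Polynomial.toLaurent f, fun x hx => by
    rw [eval₂_toLaurent, Units.val_mk0, Polynomial.eval₂_id]⟩

theorem add {g h : F → F} (hg : IsLaurent g) (hh : IsLaurent h) :
    IsLaurent fun x => g x + h x := by
  obtain ⟨p, hp⟩ := hg
  obtain ⟨q, hq⟩ := hh
  exact ⟨p + q, fun x hx => by rw [map_add, ← hp x hx, ← hq x hx]⟩

theorem mul {g h : F → F} (hg : IsLaurent g) (hh : IsLaurent h) :
    IsLaurent fun x => g x * h x := by
  obtain ⟨p, hp⟩ := hg
  obtain ⟨q, hq⟩ := hh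
  exact ⟨p * q, fun x hx => by rw [map_mul, ← hp x hx, ← hq x hx]⟩

theorem sum {ι : Type*} (s : Finset ι) {g : ι → F → F} (hg : ∀ i ∈ s, IsLaurent (g i)) :
    IsLaurent fun x => ∑ i ∈ s, g i x := by
  simpa only [← Finset.sum_apply] using
    Finset.sum_induction g IsLaurent (fun _ _ => add) (const 0) hg

end IsLaurent

theorem Polynomial.eval_eq_eval_add_mul_divByMonic (f : Polynomial F) (c x : F) :
    f.eval x = f.eval c + (x - c) * (f /ₘ (Polynomial.X - Polynomial.C c)).eval x := by
  conv_lhs => rw [← f.modByMonic_add_div (Polynomial.X - Polynomial.C c),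
    Polynomial.modByMonic_X_sub_C_eq_C_eval]
  simp only [Polynomial.eval_add, Polynomial.eval_mul, Polynomial.eval_sub, Polynomial.eval_C,
    Polynomial.eval_X]

variable {n : ℕ}

def AvoidsPoles (α : Fin n → F) (i : Fin n) (d : ℕ) (x : F) : Prop :=
  ∀ j : Fin n, j ≠ i → ∀ d' : ℕ, 1 ≤ d' → d' ≤ d → x ≠ (α j - α i) / (d' : F)

def recursionTail (α : Fin n → F) (C : Fin n → Fin n → ℕ → F) (Z : F → Fin n → ℕ → F)
    (i : Fin n) (d : ℕ) (x : F) : F :=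
  ∑ d' ∈ Icc 1 d, ∑ j ∈ univ.erase i,
    C i j d' * (x - (α j - α i) / (d' : F))⁻¹ * Z ((α j - α i) / (d' : F)) j (d - d')

theorem cRecursive_iff_isLaurent {α : Fin n → F} {C : Fin n → Fin n → ℕ → F}
    {Z : F → Fin n → ℕ → F} :
    CRecursive α C Z ↔ ∀ i d, ∃ g : F → F, IsLaurent g ∧
      ∀ x ≠ 0, AvoidsPoles α i d x → Z x i d = g x + recursionTail α C Z i d x := by
  constructor
  · rintro ⟨N, c, hrec⟩ i d
    exact ⟨fun x => ∑ r ∈ Icc (-(N d : ℤ)) (N d), c i d r * x ^ (-r),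
      IsLaurent.sum _ fun r _ => (IsLaurent.const _).mul (IsLaurent.zpow _), hrec i d⟩
  · intro h
    choose g hg hZ using h
    choose p hp using hg
    let N d := univ.sup fun i => (p i d).coeff.support.sup Int.natAbs
    have hN i d : (p i d).coeff.support ⊆ Icc (-(N d : ℤ)) (N d) :=
      coeff_support_subset_Icc _
        (le_sup (f := fun i => (p i d).coeff.support.sup Int.natAbs) (mem_univ i))
    refine ⟨N, fun i d r => (p i d).coeff (-r), fun i d x hx hpoles => ?_⟩
    rw [hZ i d x hx hpoles, hp i d x hx, eval₂_mk0_eq_sum_Icc _ hx (hN i d)]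
    rfl

theorem exists_isLaurent_eval_mul_recursionTail (α : Fin n → F) (C : Fin n → Fin n → ℕ → F)
    (Z : F → Fin n → ℕ → F) (f : Polynomial F) (i : Fin n) (d : ℕ) :
    ∃ g : F → F, IsLaurent g ∧ ∀ x, AvoidsPoles α i d x →
      f.eval x * recursionTail α C Z i d x
        = g x + recursionTail α C (fun x i d => f.eval x * Z x i d) i d x := by
  refine ⟨fun x => ∑ d' ∈ Icc 1 d, ∑ j ∈ univ.erase i, C i j d' *
      (f /ₘ (Polynomial.X - Polynomial.C ((α j - α i) / (d' : F)))).eval x *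
        Z ((α j - α i) / (d' : F)) j (d - d'),
    IsLaurent.sum _ fun d' _ => IsLaurent.sum _ fun j _ =>
      ((IsLaurent.const _).mul (IsLaurent.polynomial_eval _)).mul (IsLaurent.const _),
    fun x hpoles => ?_⟩
  simp only [recursionTail, mul_sum, ← sum_add_distrib]
  refine sum_congr rfl fun d' hd' => sum_congr rfl fun j hj => ?_
  have hxc : x - (α j - α i) / (d' : F) ≠ 0 := sub_ne_zero.2 <|
    hpoles j (ne_of_mem_erase hj) d' (mem_Icc.1 hd').1 (mem_Icc.1 hd').2
  rw [f.eval_eq_eval_add_mul_divByMonic ((α j - α i) / (d' : F)) x]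
  field_simp
  ring

end

theorem stmt_5_general {F : Type*} [Field F] {n : ℕ} (α : Fin n → F)
    (C : Fin n → Fin n → ℕ → F) (Z : F → Fin n → ℕ → F)
    (hZ : CRecursive α C Z) (f : Polynomial F) :
    CRecursive α C (fun hbar i d => Polynomial.eval hbar f * Z hbar i d) := by
  rw [cRecursive_iff_isLaurent] at hZ ⊢
  intro i d
  obtain ⟨g, hg, hZ⟩ := hZ i d
  obtain ⟨h, hh, hfZ⟩ := exists_isLaurent_eval_mul_recursionTail α C Z f i d
  refine ⟨fun x => f.eval x * g x + h x, ((IsLaurent.polynomial_eval f).mul hg).add hh,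
    fun x hx hpoles => ?_⟩
  rw [hZ x hx hpoles, mul_add, hfZ x hpoles, add_assoc]

/-- If `Z` is `C`-recursive and `f ∈ F[hbar]`, then `Z̄ = f(hbar)·Z` is again `C`-recursive
with the same recursion coefficients `C_i^j(d)`. -/
theorem stmt_5 {F : Type*} [Field F] [CharZero F] {n : ℕ} (α : Fin n → F)
    (hα : Function.Injective α) (C : Fin n → Fin n → ℕ → F) (Z : F → Fin n → ℕ → F)
    (hZ : CRecursive α C Z) (f : Polynomial F) :
    CRecursive α C (fun hbar i d => Polynomial.eval hbar f * Z hbar i d) :=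
  stmt_5_general α C Z hZ f
end
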